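/- If a density operator ρ on H_{AB} ⊗ H_C is separable across the cut AB|C, then there exists a finite set of product vectors {ψᵢ ⊗ φᵢ} (ψᵢ ∈ H_{AB}, φᵢ ∈ H_C) spanning the range of ρ such that the partially conjugated vectors {ψᵢ ⊗ φᵢ*} span the range of ρ^{T_C} (the range criterion). -/

import Mathlib

/-!
Write a separable `ρ = ∑ pᵢ vᵢ vᵢ*` as `A Aᴴ`, where `A` has the columns `√pᵢ vᵢ`. Then
`range ρ ≤ range A = span {vᵢ}`, and the two are equal since `rank (A Aᴴ) = rank A`.
The partial transpose on `C` sends each `|ψ ⊗ φ⟩⟨ψ ⊗ φ|` to `|ψ ⊗ φ*⟩⟨ψ ⊗ φ*|`, so `ρ^{T_C}` is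
separable with the same weights and the partially conjugated vectors, and the same argument applies.
-/

noncomputable section

open scoped BigOperators ComplexOrder

/-- tensor product of a vector on H_AB and a vector on H_C -/
def tens {m d : ℕ} (ψ : Fin m → ℂ) (φ : Fin d → ℂ) : Fin m × Fin d → ℂ :=
  fun x => ψ x.1 * φ x.2

/-- standard inner product -/
def ip {n : Type*} [Fintype n] (x y : n → ℂ) : ℂ := ∑ i, star (x i) * y i

/-- partial transpose with respect to the second factor (subsystem C) -/
def ptC {m d : ℕ} (ρ : Matrix (Fin m × Fin d) (Fin m × Fin d) ℂ) :
    Matrix (Fin m × Fin d) (Fin m × Fin d) ℂ :=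
  Matrix.of fun x y => ρ (x.1, y.2) (y.1, x.2)

open Matrix

section

variable {R : Type*} [Field R] [PartialOrder R] [StarRing R] [StarOrderedRing R]
  {m n : Type*} [Fintype m] [Fintype n]

theorem Matrix.range_mulVecLin_self_mul_conjTranspose (A : Matrix m n R) :
    LinearMap.range (A * Aᴴ).mulVecLin = LinearMap.range A.mulVecLin :=
  Submodule.eq_of_le_of_finrank_eq
    (by rw [mulVecLin_mul]; exact LinearMap.range_comp_le_range _ _)
    (rank_self_mul_conjTranspose A)

end

theorem Submodule.span_range_smul_of_ne_zero {K V ι : Type*} [DivisionRing K] [AddCommGroup V]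
    [Module K V] {c : ι → K} (hc : ∀ i, c i ≠ 0) (v : ι → V) :
    span K (Set.range fun i => c i • v i) = span K (Set.range v) := by
  simp_rw [span_range_eq_iSup, span_singleton_smul_eq (hc _).isUnit]

section

variable {𝕜 : Type*} [RCLike 𝕜] {K ι : Type*} [Fintype ι]

theorem sum_smul_vecMulVec_eq_mul_conjTranspose {p : ι → ℝ} (hp : ∀ i, 0 ≤ p i)
    (v : ι → K → 𝕜) :
    ∑ i, (p i : 𝕜) • vecMulVec (v i) (star (v i)) =
      of (fun k i => (√(p i) : 𝕜) * v i k) * (of fun k i => (√(p i) : 𝕜) * v i k)ᴴ := by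
  ext a b
  simp only [Matrix.sum_apply, Matrix.smul_apply, vecMulVec_apply, mul_apply, conjTranspose_apply,
    of_apply, Pi.star_apply, star_mul', RCLike.star_def, RCLike.conj_ofReal, smul_eq_mul]
  refine Finset.sum_congr rfl fun i _ => ?_
  rw [show (p i : 𝕜) = √(p i) * √(p i) by rw [← RCLike.ofReal_mul, Real.mul_self_sqrt (hp i)]]
  ring

theorem range_mulVecLin_sum_smul_vecMulVec [Fintype K] {p : ι → ℝ} (hp : ∀ i, 0 < p i)
    (v : ι → K → 𝕜) :
    LinearMap.range (∑ i, (p i : 𝕜) • vecMulVec (v i) (star (v i))).mulVecLin =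
      Submodule.span 𝕜 (Set.range v) := by
  rw [sum_smul_vecMulVec_eq_mul_conjTranspose (fun i => (hp i).le),
    range_mulVecLin_self_mul_conjTranspose, range_mulVecLin]
  exact Submodule.span_range_smul_of_ne_zero
    (fun i => RCLike.ofReal_ne_zero.2 (Real.sqrt_pos.2 (hp i)).ne') v

end

theorem ptC_sum_smul {m d : ℕ} {ι : Type*} (s : Finset ι) (c : ι → ℂ)
    (M : ι → Matrix (Fin m × Fin d) (Fin m × Fin d) ℂ) :
    ptC (∑ i ∈ s, c i • M i) = ∑ i ∈ s, c i • ptC (M i) := by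
  ext x y
  simp [ptC, Matrix.sum_apply]

theorem ptC_vecMulVec_tens {m d : ℕ} (ψ : Fin m → ℂ) (φ : Fin d → ℂ) :
    ptC (vecMulVec (tens ψ φ) (star (tens ψ φ))) =
      vecMulVec (tens ψ (star φ)) (star (tens ψ (star φ))) := by
  ext x y
  simp only [ptC, of_apply, vecMulVec_apply, tens, Pi.star_apply, star_mul', star_star]
  ring

/-- the range criterion for states separable across the cut AB|C -/
theorem range_criterion {m d : ℕ} (ρ : Matrix (Fin m × Fin d) (Fin m × Fin d) ℂ)
    (hsep : ∃ (n : ℕ) (p : Fin n → ℝ) (ψ : Fin n → Fin m → ℂ) (φ : Fin n → Fin d → ℂ),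
      (∀ i, 0 < p i) ∧ (∑ i, p i) = 1 ∧
      (∀ i, ip (ψ i) (ψ i) = 1) ∧ (∀ i, ip (φ i) (φ i) = 1) ∧
      ρ = ∑ i, (p i : ℂ) •
        Matrix.vecMulVec (tens (ψ i) (φ i)) (star (tens (ψ i) (φ i)))) :
    ∃ (n : ℕ) (ψ : Fin n → Fin m → ℂ) (φ : Fin n → Fin d → ℂ),
      Submodule.span ℂ (Set.range fun i => tens (ψ i) (φ i)) =
        LinearMap.range ρ.mulVecLin ∧
      Submodule.span ℂ (Set.range fun i => tens (ψ i) (fun k => star (φ i k))) =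
        LinearMap.range (ptC ρ).mulVecLin := by
  obtain ⟨n, p, ψ, φ, hp, -, -, -, rfl⟩ := hsep
  refine ⟨n, ψ, φ, ?_, ?_⟩
  · exact (range_mulVecLin_sum_smul_vecMulVec hp fun i => tens (ψ i) (φ i)).symm
  · simp_rw [ptC_sum_smul, ptC_vecMulVec_tens]
    exact (range_mulVecLin_sum_smul_vecMulVec hp fun i => tens (ψ i) (star (φ i))).symm
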